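/- If w_i = Σ_j A_{ij} u_j for an invertible g×g matrix A over ℂ, then the wedge of all degree-n symmetrized monomials in the w's equals (det A)^{C(g+n-1,n-1)} times the wedge of the corresponding symmetrized monomials in the u's. -/

import Mathlib

/-!
The substitution `u ↦ A u` acts on the degree-`n` polynomials through the matrix `Sym^n A` of
coefficients in the monomial basis, so the wedge of the substituted monomials is
`det (Sym^n A)` times the wedge of the monomials. Since `A ↦ Sym^n A` is multiplicative, it
suffices to compute `det (Sym^n A)` for diagonal matrices and transvections. Both are triangular
for a suitable weight on the variables, and then `Sym^n A` is triangular for the induced weight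
on monomials, with diagonal entries `∏ⱼ A_jj ^ d_j`; hence `det (Sym^n A) = ∏ⱼ A_jj ^ Σ_d d_j`.
Permuting the variables shows that `Σ_d d_j` does not depend on `j`, so it equals
`n M_n / g = C(g+n-1, n-1)`.
-/

open MvPolynomial

theorem AlternatingMap.map_sum_smul_eq_det_smul {ι R M N : Type*} [Fintype ι] [DecidableEq ι]
    [CommRing R] [AddCommGroup M] [Module R M] [AddCommGroup N] [Module R N]
    (f : M [⋀^ι]→ₗ[R] N) (B : Matrix ι ι R) (v : ι → M) :
    f (fun i => ∑ j, B i j • v j) = B.det • f v := by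
  let b := Pi.basisFun R ι
  let F := f.compLinearMap (Fintype.linearCombination R v)
  have hF : F = b.det.smulRight (f v) := by
    refine b.ext_alternating fun τ hτ => ?_
    let π : Equiv.Perm ι := Equiv.ofBijective τ (Finite.injective_iff_bijective.1 hτ)
    change F (b ∘ π) = b.det.smulRight (f v) (b ∘ π)
    rw [F.map_perm, smulRight_apply, b.det.map_perm, b.det_self, Units.smul_def, Units.smul_def,
      smul_assoc, one_smul]
    simp [F, b]
  have := congrArg (fun F => F (fun i => B i)) hF
  simp only [F, b, compLinearMap_apply, Fintype.linearCombination_apply, smulRight_apply,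
    Pi.basisFun_det_apply] at this
  exact this

theorem Matrix.det_eq_prod_diag_of_key {n R α : Type*} [Fintype n] [DecidableEq n] [CommRing R]
    [LinearOrder α] (M : Matrix n n R) (key : n → α)
    (hM : ∀ i j, i ≠ j → key i ≤ key j → M i j = 0) :
    M.det = ∏ i, M i i := by
  let _ : LinearOrder n := LinearOrder.lift' (fun i => toLex (key i, Fintype.equivFin n i))
    fun i j h => by simp_all
  refine det_of_isLowerTriangular M fun i j hij => hM i j (ne_of_lt hij) ?_
  have : toLex (key i, Fintype.equivFin n i) < toLex (key j, Fintype.equivFin n j) := hij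
  exact Prod.Lex.lt_iff.1 this |>.elim le_of_lt fun h => h.1.le

theorem Nat.mul_choose_pred (g n : ℕ) (hn : 1 ≤ n) :
    g * (g + n - 1).choose (n - 1) = n * (g + n - 1).choose n := by
  obtain ⟨k, rfl⟩ := Nat.exists_eq_add_of_le' hn
  have h := Nat.choose_succ_right_eq (g + k) k
  rw [Nat.add_sub_cancel] at h
  rw [show g + (k + 1) - 1 = g + k by omega, Nat.add_sub_cancel, mul_comm, ← h, mul_comm]

namespace MvPolynomial

section WeightedLeadingTerm

variable {σ R : Type*} [CommRing R]

open Classical in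
/-- `p` is `c • X ^ D` plus terms of smaller `w`-weight; `c` is allowed to vanish. -/
def HasWeightedLeadingTerm (w : σ → ℕ) (D : σ →₀ ℕ) (c : R) (p : MvPolynomial σ R) : Prop :=
  ∀ m, Finsupp.weight w D ≤ Finsupp.weight w m → coeff m p = if m = D then c else 0

namespace HasWeightedLeadingTerm

variable {w : σ → ℕ}

theorem one : HasWeightedLeadingTerm w 0 (1 : R) 1 := fun m _ => by
  classical
  rw [coeff_one]
  simp [eq_comm]

theorem mul {D E : σ →₀ ℕ} {c d : R} {p q : MvPolynomial σ R}
    (hp : HasWeightedLeadingTerm w D c p) (hq : HasWeightedLeadingTerm w E d q) :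
    HasWeightedLeadingTerm w (D + E) (c * d) (p * q) := by
  classical
  intro m hm
  rw [map_add] at hm
  have hterm : ∀ x ∈ Finset.HasAntidiagonal.antidiagonal m, coeff x.1 p * coeff x.2 q =
      if x = (D, E) then c * d else 0 := by
    rintro ⟨u, v⟩ huv
    rw [Finset.HasAntidiagonal.mem_antidiagonal] at huv
    have hsum : Finsupp.weight w u + Finsupp.weight w v = Finsupp.weight w m := by
      rw [← map_add, huv]
    rcases le_or_gt (Finsupp.weight w D) (Finsupp.weight w u) with hu | hu
    · rw [hp u hu]
      by_cases huD : u = D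
      · subst huD
        rw [hq v (by omega)]
        by_cases hvE : v = E <;> simp [hvE]
      · simp [huD]
    · rw [hq v (by omega), if_neg (by rintro rfl; omega)]
      simp [show u ≠ D by rintro rfl; omega]
  rw [coeff_mul, Finset.sum_congr rfl hterm, Finset.sum_ite_eq']
  simp [Finset.HasAntidiagonal.mem_antidiagonal, eq_comm]

theorem prod {ι : Type*} {s : Finset ι} {D : ι → σ →₀ ℕ} {c : ι → R}
    {p : ι → MvPolynomial σ R} (h : ∀ a ∈ s, HasWeightedLeadingTerm w (D a) (c a) (p a)) :
    HasWeightedLeadingTerm w (∑ a ∈ s, D a) (∏ a ∈ s, c a) (∏ a ∈ s, p a) := by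
  classical
  induction s using Finset.induction with
  | empty => simpa using one
  | insert x s hx ih =>
    simp only [Finset.sum_insert hx, Finset.prod_insert hx]
    exact (h x (s.mem_insert_self x)).mul (ih fun a ha => h a (Finset.mem_insert_of_mem ha))

theorem pow {D : σ →₀ ℕ} {c : R} {p : MvPolynomial σ R} (h : HasWeightedLeadingTerm w D c p)
    (k : ℕ) : HasWeightedLeadingTerm w (k • D) (c ^ k) (p ^ k) := by
  simpa using prod (s := Finset.range k) fun _ _ => h

end HasWeightedLeadingTerm

theorem hasWeightedLeadingTerm_linearForm [Fintype σ] [DecidableEq σ] {w : σ → ℕ} (a : σ → R)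
    (j : σ) (ha : ∀ k, k ≠ j → w j ≤ w k → a k = 0) :
    HasWeightedLeadingTerm w (Finsupp.single j 1) (a j) (∑ k, a k • X k) := by
  intro m hm
  simp only [coeff_sum, coeff_smul, coeff_X, smul_eq_mul, mul_ite, mul_one, mul_zero]
  by_cases hmj : m = Finsupp.single j 1
  · subst hmj
    simp [Finsupp.single_left_inj one_ne_zero]
  · rw [if_neg hmj]
    refine Finset.sum_eq_zero fun k _ => ?_
    split_ifs with hk
    · subst hk
      exact ha k (by rintro rfl; exact hmj rfl) (by simpa [Finsupp.weight_single] using hm)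
    · rfl

end WeightedLeadingTerm

section LinearSubst

variable {σ R : Type*} [Fintype σ] [CommRing R]

noncomputable def linearSubst (A : Matrix σ σ R) : MvPolynomial σ R →ₐ[R] MvPolynomial σ R :=
  aeval fun j => ∑ k, A j k • X k

@[simp]
theorem linearSubst_X (A : Matrix σ σ R) (j : σ) : linearSubst A (X j) = ∑ k, A j k • X k :=
  aeval_X _ _

theorem linearSubst_one [DecidableEq σ] : linearSubst (1 : Matrix σ σ R) = AlgHom.id R _ :=
  algHom_ext fun j => by simp [Matrix.one_apply, ite_smul]

theorem linearSubst_comp (A B : Matrix σ σ R) :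
    (linearSubst A).comp (linearSubst B) = linearSubst (B * A) := by
  refine algHom_ext fun j => ?_
  simp only [AlgHom.comp_apply, linearSubst_X, map_sum, map_smul, Finset.smul_sum, smul_smul,
    Matrix.mul_apply, Finset.sum_smul]
  exact Finset.sum_comm

theorem isHomogeneous_linearSubst {p : MvPolynomial σ R} {n : ℕ} (hp : p.IsHomogeneous n)
    (A : Matrix σ σ R) : (linearSubst A p).IsHomogeneous n := by
  have hX (j : σ) : (∑ k, A j k • X k : MvPolynomial σ R).IsHomogeneous 1 :=
    IsHomogeneous.sum _ _ 1 fun k _ => by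
      rw [smul_eq_C_mul]
      exact isHomogeneous_C_mul_X (A j k) k
  rw [← one_mul n]
  exact hp.aeval _ hX

end LinearSubst

end MvPolynomial

namespace SymPow

variable {σ ι R : Type*} [Fintype σ] [CommRing R] {n : ℕ}
  (e : ι ≃ {d : σ → ℕ // ∑ j, d j = n})

noncomputable def exponent (i : ι) : σ →₀ ℕ := Finsupp.equivFunOnFinite.symm (e i)

variable (R) in
noncomputable def basisMonomial (i : ι) : MvPolynomial σ R := monomial (exponent e i) 1

/-- Row `i` lists the coefficients of `linearSubst A` applied to the `i`-th monomial. -/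
noncomputable def matrix (A : Matrix σ σ R) : Matrix ι ι R :=
  .of fun i i' => coeff (exponent e i') (linearSubst A (basisMonomial R e i))

theorem matrix_apply (A : Matrix σ σ R) (i i' : ι) :
    matrix e A i i' = coeff (exponent e i') (linearSubst A (basisMonomial R e i)) :=
  rfl

theorem exponent_injective : Function.Injective (exponent e) :=
  Finsupp.equivFunOnFinite.symm.injective.comp (Subtype.val_injective.comp e.injective)

theorem exists_exponent_eq {m : σ →₀ ℕ} (hm : m.degree = n) : ∃ i, exponent e i = m :=
  ⟨e.symm ⟨m, by rwa [← Finsupp.degree_eq_sum]⟩, by simp [exponent]⟩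

theorem degree_exponent (i : ι) : (exponent e i).degree = n := by
  simpa [Finsupp.degree_eq_sum, exponent] using (e i).2

theorem basisMonomial_eq_prod (i : ι) : basisMonomial R e i = ∏ j, X j ^ (e i : σ → ℕ) j := by
  rw [basisMonomial, ← prod_X_pow_eq_monomial]
  exact Finset.prod_subset (Finset.subset_univ _) fun j _ hj => by
    simp [Finsupp.notMem_support_iff.1 hj]

theorem hasWeightedLeadingTerm_linearSubst_basisMonomial [DecidableEq σ] {w : σ → ℕ}
    {A : Matrix σ σ R} (hA : ∀ a b, a ≠ b → w a ≤ w b → A a b = 0) (i : ι) :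
    HasWeightedLeadingTerm w (exponent e i) (∏ j, A j j ^ (e i : σ → ℕ) j)
      (linearSubst A (basisMonomial R e i)) := by
  rw [basisMonomial_eq_prod, map_prod]
  simp only [map_pow, linearSubst_X]
  convert HasWeightedLeadingTerm.prod (s := Finset.univ) fun j _ =>
    (hasWeightedLeadingTerm_linearForm (A j) j fun k hk hw => hA j k (Ne.symm hk) hw).pow
      ((e i : σ → ℕ) j) using 1
  ext a
  simp [exponent, Finsupp.single_apply]

theorem sum_exponent_eq [Fintype ι] [DecidableEq σ] (a b : σ) :
    ∑ i, (e i : σ → ℕ) a = ∑ i, (e i : σ → ℕ) b := by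
  let swap : {d : σ → ℕ // ∑ j, d j = n} ≃ {d : σ → ℕ // ∑ j, d j = n} :=
    ((Equiv.swap a b).arrowCongr (Equiv.refl ℕ)).subtypeEquiv fun d => by
      simp [Equiv.arrowCongr_apply, Equiv.sum_comp]
  rw [← (e.trans (swap.trans e.symm)).sum_comp]
  simp [swap, Equiv.arrowCongr_apply]

theorem card_mul_sum_exponent [Fintype ι] (a : σ) :
    Fintype.card σ * ∑ i, (e i : σ → ℕ) a = n * Fintype.card ι := by
  classical
  calc Fintype.card σ * ∑ i, (e i : σ → ℕ) a = ∑ b, ∑ i, (e i : σ → ℕ) b := by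
        simp [sum_exponent_eq e _ a]
    _ = ∑ i, ∑ b, (e i : σ → ℕ) b := Finset.sum_comm
    _ = n * Fintype.card ι := by simp [(e _).2, mul_comm]

variable [DecidableEq ι]

theorem coeff_exponent_basisMonomial (i i' : ι) :
    coeff (exponent e i') (basisMonomial R e i) = (1 : Matrix ι ι R) i i' := by
  classical
  rw [basisMonomial, coeff_monomial]
  simp [Matrix.one_apply, (exponent_injective e).eq_iff]

theorem matrix_one [DecidableEq σ] : matrix e (1 : Matrix σ σ R) = 1 := by
  ext i i'
  rw [matrix_apply, linearSubst_one, AlgHom.id_apply, coeff_exponent_basisMonomial]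

variable [Fintype ι]

theorem coeff_exponent_sum_smul_basisMonomial (c : ι → R) (i' : ι) :
    coeff (exponent e i') (∑ i, c i • basisMonomial R e i) = c i' := by
  simp [coeff_sum, coeff_exponent_basisMonomial, Matrix.one_apply]

theorem linearSubst_basisMonomial (A : Matrix σ σ R) (i : ι) :
    linearSubst A (basisMonomial R e i) = ∑ i', matrix e A i i' • basisMonomial R e i' := by
  classical
  ext m
  by_cases hm : m.degree = n
  · obtain ⟨i', rfl⟩ := exists_exponent_eq e hm
    rw [coeff_exponent_sum_smul_basisMonomial, matrix_apply]
  · have hhom : (linearSubst A (basisMonomial R e i)).IsHomogeneous n :=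
      isHomogeneous_linearSubst (isHomogeneous_monomial _ (degree_exponent e i)) A
    rw [hhom.coeff_eq_zero hm, coeff_sum]
    refine (Finset.sum_eq_zero fun i' _ => ?_).symm
    rw [coeff_smul, basisMonomial, coeff_monomial,
      if_neg (by rintro rfl; exact hm (degree_exponent e i')), smul_zero]

theorem matrix_mul (A B : Matrix σ σ R) : matrix e (B * A) = matrix e B * matrix e A := by
  ext i i'
  have hsubst : linearSubst (B * A) (basisMonomial R e i) =
      ∑ l, (matrix e B * matrix e A) i l • basisMonomial R e l := by
    rw [← linearSubst_comp, AlgHom.comp_apply, linearSubst_basisMonomial e B, map_sum]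
    simp_rw [map_smul, linearSubst_basisMonomial e A, Finset.smul_sum, smul_smul]
    rw [Finset.sum_comm]
    simp_rw [Matrix.mul_apply, Finset.sum_smul]
  rw [matrix_apply, hsubst, coeff_exponent_sum_smul_basisMonomial]

variable [DecidableEq σ]

theorem det_matrix_of_triangular {w : σ → ℕ} {A : Matrix σ σ R}
    (hA : ∀ a b, a ≠ b → w a ≤ w b → A a b = 0) {C : ℕ}
    (hC : ∀ a, ∑ i, (e i : σ → ℕ) a = C) : (matrix e A).det = A.det ^ C := by
  have hle (i i' : ι) (h : Finsupp.weight w (exponent e i) ≤ Finsupp.weight w (exponent e i')) :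
      matrix e A i i' = if i' = i then ∏ j, A j j ^ (e i : σ → ℕ) j else 0 := by
    rw [matrix_apply, hasWeightedLeadingTerm_linearSubst_basisMonomial e hA i _ h]
    simp only [(exponent_injective e).eq_iff]
  rw [Matrix.det_eq_prod_diag_of_key _ (fun i => Finsupp.weight w (exponent e i))
      fun i i' hne h => by rw [hle i i' h, if_neg hne.symm],
    Matrix.det_eq_prod_diag_of_key A w hA, ← Finset.prod_pow]
  simp only [fun i => hle i i le_rfl, if_pos]
  rw [Finset.prod_comm]
  simp only [Finset.prod_pow_eq_pow_sum, hC]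

theorem det_matrix {K : Type*} [Field K] (A : Matrix σ σ K) {C : ℕ}
    (hC : ∀ a, ∑ i, (e i : σ → ℕ) a = C) : (matrix e A).det = A.det ^ C := by
  induction A using Matrix.diagonal_transvection_induction with
  | hdiag D _ =>
    exact det_matrix_of_triangular e (w := 0) (fun a b hab _ => Matrix.diagonal_apply_ne D hab) hC
  | htransvec t =>
    refine det_matrix_of_triangular e (w := Pi.single t.i 1) (fun a b hab hw => ?_) hC
    rcases t with ⟨i, j, hij, c⟩
    simp only [Matrix.TransvectionStruct.toMatrix_mk, Matrix.transvection, Matrix.add_apply,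
      Matrix.one_apply_ne hab, Matrix.single_apply, zero_add] at hw ⊢
    grind
  | hmul A B hA hB => rw [matrix_mul, Matrix.det_mul, Matrix.det_mul, hA, hB, mul_pow]

end SymPow

/-- `Sym^n V` is modelled by the degree-`n` polynomials in the variables `X j = u_j`. -/
theorem stmt_2_general (g n : ℕ) (hn : 1 ≤ n)
    (A : Matrix (Fin g) (Fin g) ℂ)
    (e : Fin ((g + n - 1).choose n) ≃ {d : Fin g → ℕ // ∑ j, d j = n}) :
    ExteriorAlgebra.ιMulti ℂ ((g + n - 1).choose n)
        (fun i => ∏ j, (∑ k, A j k • (X k : MvPolynomial (Fin g) ℂ)) ^ ((e i : Fin g → ℕ) j)) =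
      A.det ^ ((g + n - 1).choose (n - 1)) •
        ExteriorAlgebra.ιMulti ℂ ((g + n - 1).choose n)
          (fun i => ∏ j, (X j : MvPolynomial (Fin g) ℂ) ^ ((e i : Fin g → ℕ) j)) := by
  have hC (a : Fin g) : ∑ i, (e i : Fin g → ℕ) a = (g + n - 1).choose (n - 1) := by
    have h := SymPow.card_mul_sum_exponent e a
    rw [Fintype.card_fin, Fintype.card_fin, ← Nat.mul_choose_pred g n hn] at h
    exact Nat.eq_of_mul_eq_mul_left a.pos h
  have hsubst (i) : ∏ j, (∑ k, A j k • (X k : MvPolynomial (Fin g) ℂ)) ^ ((e i : Fin g → ℕ) j) =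
      ∑ i', SymPow.matrix e A i i' • SymPow.basisMonomial ℂ e i' := by
    rw [← SymPow.linearSubst_basisMonomial, SymPow.basisMonomial_eq_prod, map_prod]
    simp
  simp_rw [hsubst, ← SymPow.basisMonomial_eq_prod]
  rw [AlternatingMap.map_sum_smul_eq_det_smul, SymPow.det_matrix e A hC]

/-- Eq. (1.2): if `w_i = Σ_j A_{ij} u_j` for an invertible matrix `A`, with
`u_j = X_j` the variables (a basis of the `g`-dimensional space `V`), then the
wedge of all `M_n = C(g+n-1,n)` degree-`n` symmetrized monomials in the `w`'s
equals `(det A)^{C(g+n-1,n-1)}` times the wedge of the corresponding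
symmetrized monomials in the `u`'s.  The monomials of degree `n` are enumerated
by any bijection `e` from `Fin M_n` to the exponent vectors `d` with `Σ d = n`. -/
theorem stmt_2 (g n : ℕ) (hg : 1 ≤ g) (hn : 1 ≤ n)
    (A : Matrix (Fin g) (Fin g) ℂ) (hA : IsUnit A.det)
    (e : Fin ((g + n - 1).choose n) ≃ {d : Fin g → ℕ // ∑ j, d j = n}) :
    ExteriorAlgebra.ιMulti ℂ ((g + n - 1).choose n)
        (fun i => ∏ j, (∑ k, A j k • (X k : MvPolynomial (Fin g) ℂ)) ^ ((e i : Fin g → ℕ) j)) =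
      A.det ^ ((g + n - 1).choose (n - 1)) •
        ExteriorAlgebra.ιMulti ℂ ((g + n - 1).choose n)
          (fun i => ∏ j, (X j : MvPolynomial (Fin g) ℂ) ^ ((e i : Fin g → ℕ) j)) :=
  stmt_2_general g n hn A e
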